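/- arXiv:nlin/0107026 — 5 statements merged into one kernel-verified Lean document; each statement's English description precedes it below -/
import Mathlib

section
/- Let f₀ : I → I be continuous on a compact interval I = [a,b], and define f_{n+1} = (1-ε)f_n + ε(f_n ∘ f_n). Then the set Ω = ⋃_{n≥0} f_n⁻¹(Fix(f_n)) is nonempty, for every x ∈ Ω the limit f_∞(x) = lim f_n(x) exists, and f_∞(f_∞(x)) = f_∞(x) for all x ∈ Ω. -/
open Filter Topology

/-- If y is fixed by f n, it stays fixed forever. -/
lemma fd_fix_persists (ε : ℝ) (f : ℕ → ℝ → ℝ)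
    (hrec : ∀ n x, f (n + 1) x = (1 - ε) * f n x + ε * f n (f n x))
    {n : ℕ} {y : ℝ} (hy : f n y = y) : ∀ m, n ≤ m → f m y = y := by
  intro m hm
  induction m, hm using Nat.le_induction with
  | base => exact hy
  | succ m hm ih => rw [hrec, ih, ih]; ring

/-- Theorem 1: for continuous f₀ on a compact interval, the set
    Ω = ⋃ₙ fₙ⁻¹(Fix fₙ) is nonempty, on Ω the limit f_∞ exists pointwise,
    and f_∞ ∘ f_∞ = f_∞ on Ω. -/
theorem function_dynamics_limit (a b : ℝ) (hab : a ≤ b) (ε : ℝ) (hε : 0 < ε) (hε1 : ε ≤ 1)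
    (f : ℕ → ℝ → ℝ)
    (hcont : ContinuousOn (f 0) (Set.Icc a b))
    (hmap : ∀ x ∈ Set.Icc a b, f 0 x ∈ Set.Icc a b)
    (hrec : ∀ n x, f (n + 1) x = (1 - ε) * f n x + ε * f n (f n x)) :
    (⋃ n, {x ∈ Set.Icc a b | f n (f n x) = f n x}).Nonempty ∧
      ∃ finf : ℝ → ℝ,
        (∀ x ∈ ⋃ n, {x ∈ Set.Icc a b | f n (f n x) = f n x},
          Tendsto (fun n => f n x) atTop (𝓝 (finf x))) ∧
        (∀ x ∈ ⋃ n, {x ∈ Set.Icc a b | f n (f n x) = f n x},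
          finf (finf x) = finf x) := by
  -- fixed point of f 0 by IVT
  have hg : ContinuousOn (fun x => f 0 x - x) (Set.Icc a b) :=
    hcont.sub continuousOn_id
  have h0 : (0 : ℝ) ∈ Set.Icc ((fun x => f 0 x - x) b) ((fun x => f 0 x - x) a) := by
    have ha := hmap a (Set.left_mem_Icc.2 hab)
    have hb := hmap b (Set.right_mem_Icc.2 hab)
    constructor <;> simp only [] <;> [linarith [hb.2]; linarith [ha.1]]
  obtain ⟨x₀, hx₀I, hx₀⟩ := intermediate_value_Icc' hab hg h0
  have hx₀fix : f 0 x₀ = x₀ := by have := hx₀; simp at this; linarith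
  -- key: for x in Ω with witness n, f m x = f n x for m > n, and f n x stays fixed
  have key : ∀ n x, f n (f n x) = f n x →
      (∀ m, n + 1 ≤ m → f m x = f n x) := by
    intro n x hx m hm
    induction m, hm using Nat.le_induction with
    | base => rw [hrec, hx]; ring
    | succ m hm ih =>
      rw [hrec, ih, fd_fix_persists ε f hrec hx m (Nat.le_of_succ_le hm)]
      ring
  refine ⟨⟨x₀, Set.mem_iUnion.2 ⟨0, hx₀I, by rw [hx₀fix]; exact hx₀fix⟩⟩, ?_⟩
  have tend : ∀ x ∈ ⋃ n, {x ∈ Set.Icc a b | f n (f n x) = f n x},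
      ∃ n, f n (f n x) = f n x ∧
        Tendsto (fun m => f m x) atTop (𝓝 (f n x)) := by
    intro x hx
    obtain ⟨n, -, hfix⟩ := Set.mem_iUnion.1 hx
    refine ⟨n, hfix, Tendsto.congr' ?_ tendsto_const_nhds⟩
    filter_upwards [eventually_ge_atTop (n + 1)] with m hm
    exact (key n x hfix m hm).symm
  refine ⟨fun x => limUnder atTop (fun m => f m x), ?_, ?_⟩
  · intro x hx
    obtain ⟨n, -, ht⟩ := tend x hx
    beta_reduce
    rwa [ht.limUnder_eq]
  · intro x hx
    obtain ⟨n, hfix, ht⟩ := tend x hx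
    beta_reduce
    rw [ht.limUnder_eq]
    have hyfix : ∀ m, n ≤ m → f m (f n x) = f n x :=
      fd_fix_persists ε f hrec hfix
    have ht2 : Tendsto (fun m => f m (f n x)) atTop (𝓝 (f n x)) := by
      refine Tendsto.congr' ?_ tendsto_const_nhds
      filter_upwards [eventually_ge_atTop n] with m hm
      exact (hyfix m hm).symm
    exact ht2.limUnder_eq
end

section
/- Let f₀ : [a,b] → [a,b] be continuous and monotone nondecreasing, and define f_{n+1} = (1-ε)f_n + ε(f_n ∘ f_n) with ε ∈ (0,1]. Then for every x ∈ [a,b], the limit f_∞(x) = lim_{n→∞} f_n(x) exists and is a fixed point of f₀. -/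
open Filter Topology

lemma aux_limit (a b : ℝ) (hab : a ≤ b) (ε : ℝ) (hε : 0 < ε) (hε1 : ε ≤ 1)
    (f : ℕ → ℝ → ℝ)
    (hcont : ContinuousOn (f 0) (Set.Icc a b))
    (hmono : MonotoneOn (f 0) (Set.Icc a b))
    (hmap : ∀ x ∈ Set.Icc a b, f 0 x ∈ Set.Icc a b)
    (hrec : ∀ n x, f (n + 1) x = (1 - ε) * f n x + ε * f n (f n x))
    (x : ℝ) (hx : x ∈ Set.Icc a b) (hxf : x ≤ f 0 x) :
    ∃ L, Tendsto (fun n => f n x) atTop (𝓝 L) ∧ f 0 L = L := by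
  set T : Set ℝ := {y | y ∈ Set.Icc x b ∧ f 0 y ≤ y} with hT
  have hbT : b ∈ T := ⟨⟨hx.2, le_refl b⟩, (hmap b ⟨hab, le_refl b⟩).2⟩
  have hTne : T.Nonempty := ⟨b, hbT⟩
  have hTbdd : BddBelow T := ⟨x, fun y hy => hy.1.1⟩
  set p : ℝ := sInf T with hp
  have hxp : x ≤ p := le_csInf hTne (fun y hy => hy.1.1)
  have hpb : p ≤ b := csInf_le hTbdd hbT
  have hpI : p ∈ Set.Icc a b := ⟨hx.1.trans hxp, hpb⟩
  have hfp_le : f 0 p ≤ p := by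
    by_contra h
    push_neg at h
    obtain ⟨y, hyT, hy⟩ := exists_lt_of_csInf_lt hTne h
    have hpy : p ≤ y := csInf_le hTbdd hyT
    have : f 0 p ≤ f 0 y := hmono hpI ⟨hx.1.trans hyT.1.1, hyT.1.2⟩ hpy
    have := hyT.2
    linarith
  have hbelow' : ∀ y, x ≤ y → y < p → y < f 0 y := by
    intro y h1 h2
    by_contra h
    push_neg at h
    have hyT : y ∈ T := ⟨⟨h1, (h2.trans_le hpb).le⟩, h⟩
    exact absurd (csInf_le hTbdd hyT) (not_le.mpr h2)
  have hfp_ge : p ≤ f 0 p := by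
    rcases eq_or_lt_of_le hxp with h | h
    · rw [← h]; exact hxf
    · refine le_of_forall_lt fun c hc => ?_
      have hyp : max c x < p := max_lt hc h
      have h5 := hbelow' (max c x) (le_max_right _ _) hyp
      have hyI : max c x ∈ Set.Icc a b := ⟨hx.1.trans (le_max_right _ _), hyp.le.trans hpb⟩
      calc c ≤ max c x := le_max_left _ _
        _ < f 0 (max c x) := h5
        _ ≤ f 0 p := hmono hyI hpI hyp.le
  have hfix : f 0 p = p := le_antisymm hfp_le hfp_ge
  have hbelow : ∀ y ∈ Set.Icc x p, y ≤ f 0 y := by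
    intro y hy
    rcases hy.2.lt_or_eq with h | h
    · exact (hbelow' y hy.1 h).le
    · rw [h, hfix]
  have hsub : ∀ y ∈ Set.Icc x p, y ∈ Set.Icc a b :=
    fun y hy => ⟨hx.1.trans hy.1, hy.2.trans hpb⟩
  have key : ∀ n, ∀ y ∈ Set.Icc x p, f 0 y ≤ f n y ∧ f n y ≤ p := by
    intro n
    induction n with
    | zero =>
      intro y hy
      refine ⟨le_refl _, ?_⟩
      rw [← hfix]
      exact hmono (hsub y hy) hpI hy.2
    | succ n ih =>
      intro y hy
      obtain ⟨h1, h2⟩ := ih y hy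
      have hy0 := hbelow y hy
      have hfnyI : f n y ∈ Set.Icc x p := ⟨hy.1.trans (hy0.trans h1), h2⟩
      obtain ⟨h3, h4⟩ := ih (f n y) hfnyI
      have h5 : f n y ≤ f n (f n y) := (hbelow _ hfnyI).trans h3
      rw [hrec]
      constructor
      · nlinarith [mul_nonneg hε.le (sub_nonneg.mpr h5)]
      · nlinarith [mul_le_mul_of_nonneg_left h2 (by linarith : (0:ℝ) ≤ 1 - ε),
          mul_le_mul_of_nonneg_left h4 hε.le]
  have hxI : x ∈ Set.Icc x p := ⟨le_refl x, hxp⟩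
  have hfnxI : ∀ n, f n x ∈ Set.Icc x p := by
    intro n
    exact ⟨hxf.trans (key n x hxI).1, (key n x hxI).2⟩
  have step : ∀ n, f n x ≤ f (n + 1) x := by
    intro n
    have h5 : f n x ≤ f n (f n x) := (hbelow _ (hfnxI n)).trans (key n _ (hfnxI n)).1
    rw [hrec]
    nlinarith [mul_nonneg hε.le (sub_nonneg.mpr h5)]
  have hmon : Monotone (fun n => f n x) := monotone_nat_of_le_succ step
  have hbdd : ∀ n, f n x ≤ p := fun n => (hfnxI n).2
  obtain ⟨L, hL⟩ : ∃ L, Tendsto (fun n => f n x) atTop (𝓝 L) := by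
    rcases tendsto_of_monotone hmon with h | h
    · exfalso
      obtain ⟨n, hn⟩ := (h.eventually_gt_atTop p).exists
      exact absurd (hbdd n) (not_le.mpr hn)
    · exact h
  have hLge : x ≤ L := ge_of_tendsto' hL (fun n => (hfnxI n).1)
  have hLle : L ≤ p := le_of_tendsto' hL hbdd
  have hLxp : L ∈ Set.Icc x p := ⟨hLge, hLle⟩
  have hLI : L ∈ Set.Icc a b := hsub L hLxp
  have hf0L_ge : L ≤ f 0 L := hbelow L hLxp
  have hcont_at : Tendsto (fun n => f 0 (f n x)) atTop (𝓝 (f 0 L)) := by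
    have h1 : Tendsto (fun n => f n x) atTop (𝓝[Set.Icc a b] L) :=
      tendsto_nhdsWithin_of_tendsto_nhds_of_eventually_within _ hL
        (Filter.Eventually.of_forall fun n => hsub _ (hfnxI n))
    exact (hcont L hLI).tendsto.comp h1
  have hineq : ∀ n, (1 - ε) * f n x + ε * f 0 (f n x) ≤ f (n + 1) x := by
    intro n
    rw [hrec]
    have h3 : f 0 (f n x) ≤ f n (f n x) := (key n _ (hfnxI n)).1
    nlinarith [mul_le_mul_of_nonneg_left h3 hε.le]
  have h1 : Tendsto (fun n => (1 - ε) * f n x + ε * f 0 (f n x)) atTop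
      (𝓝 ((1 - ε) * L + ε * f 0 L)) := (hL.const_mul _).add (hcont_at.const_mul _)
  have h2 : Tendsto (fun n => f (n + 1) x) atTop (𝓝 L) :=
    hL.comp (tendsto_add_atTop_nat 1)
  have hle : (1 - ε) * L + ε * f 0 L ≤ L := le_of_tendsto_of_tendsto' h1 h2 hineq
  have hf0L_le : f 0 L ≤ L := by
    have h' : ε * f 0 L ≤ ε * L := by linarith
    exact le_of_mul_le_mul_left h' hε
  exact ⟨L, hL, le_antisymm hf0L_le hf0L_ge⟩

/-- Example 2.4: if f₀ is continuous and monotone nondecreasing on [a,b],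
    then for every x the limit f_∞(x) exists and is a fixed point of f₀. -/
theorem limit_exists_of_monotone (a b : ℝ) (hab : a ≤ b) (ε : ℝ) (hε : 0 < ε) (hε1 : ε ≤ 1)
    (f : ℕ → ℝ → ℝ)
    (hcont : ContinuousOn (f 0) (Set.Icc a b))
    (hmono : MonotoneOn (f 0) (Set.Icc a b))
    (hmap : ∀ x ∈ Set.Icc a b, f 0 x ∈ Set.Icc a b)
    (hrec : ∀ n x, f (n + 1) x = (1 - ε) * f n x + ε * f n (f n x)) :
    ∀ x ∈ Set.Icc a b, ∃ L, Tendsto (fun n => f n x) atTop (𝓝 L) ∧ f 0 L = L := by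
  intro x hx
  rcases le_total x (f 0 x) with h | h
  · exact aux_limit a b hab ε hε hε1 f hcont hmono hmap hrec x hx h
  · set g : ℕ → ℝ → ℝ := fun n y => -(f n (-y)) with hg
    have hneg : ∀ y : ℝ, y ∈ Set.Icc (-b) (-a) ↔ -y ∈ Set.Icc a b := by
      intro y
      simp only [Set.mem_Icc]
      constructor <;> rintro ⟨h1, h2⟩ <;> constructor <;> linarith
    have hcont' : ContinuousOn (g 0) (Set.Icc (-b) (-a)) := by
      have h1 : ContinuousOn (fun y : ℝ => f 0 (-y)) (Set.Icc (-b) (-a)) :=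
        hcont.comp continuous_neg.continuousOn (fun y hy => (hneg y).1 hy)
      exact h1.neg
    have hmono' : MonotoneOn (g 0) (Set.Icc (-b) (-a)) := by
      intro y1 h1 y2 h2 h12
      simp only [hg]
      have := hmono ((hneg y2).1 h2) ((hneg y1).1 h1) (by linarith)
      linarith
    have hmap' : ∀ y ∈ Set.Icc (-b) (-a), g 0 y ∈ Set.Icc (-b) (-a) := by
      intro y hy
      rw [hneg]
      have := hmap (-y) ((hneg y).1 hy)
      simpa [hg] using this
    have hrec' : ∀ n y, g (n + 1) y = (1 - ε) * g n y + ε * g n (g n y) := by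
      intro n y
      simp only [hg, neg_neg, hrec]
      ring
    have hxmem : -x ∈ Set.Icc (-b) (-a) := by
      rw [hneg]; simpa using hx
    have hxf : -x ≤ g 0 (-x) := by
      simp only [hg, neg_neg]
      linarith
    obtain ⟨L, hL, hfix⟩ := aux_limit (-b) (-a) (by linarith) ε hε hε1 g
      hcont' hmono' hmap' hrec' (-x) hxmem hxf
    refine ⟨-L, ?_, ?_⟩
    · have := hL.neg
      simpa [hg] using this
    · simp only [hg] at hfix
      linarith
end

section
/- Assume f₀|_Ω = f_∞ with f_∞ idempotent on Ω. Define g_∞ : Ω → ℝ by g_∞(x) = (1-ε)x + ε·f_∞(x), and let Ω(g_∞) = {x ∈ Ω : g_∞^k(x) ∈ Ω for all k ≥ 0}. If x ∈ I satisfies f₀(x) ∈ Ω(g_∞), then for every n ≥ 0, f_n(x) ∈ Ω(g_∞) and f_n(x) = g_∞^n(f₀(x)), where f_{n+1} = (1-ε)f_n + ε(f_n∘f_n). -/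
/-- Theorem 3.3: trajectories starting in f₀⁻¹(Ω(g_∞)) are driven by the
    generated map g_∞: f_n(x) ∈ Ω(g_∞) and f_n(x) = g_∞ⁿ(f₀(x)). -/
theorem trajectory_driven_by_generated_map
    (I : Set ℝ) (ε : ℝ) (hε : 0 < ε) (hε1 : ε ≤ 1)
    (Ω : Set ℝ) (hΩI : Ω ⊆ I)
    (finf : ℝ → ℝ) (hmap : ∀ x ∈ Ω, finf x ∈ Ω)
    (hidem : ∀ x ∈ Ω, finf (finf x) = finf x)
    (f : ℕ → ℝ → ℝ)
    (hrec : ∀ n x, f (n + 1) x = (1 - ε) * f n x + ε * f n (f n x))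
    (h0 : ∀ x ∈ Ω, f 0 x = finf x)
    (g : ℝ → ℝ) (hg : ∀ x, g x = (1 - ε) * x + ε * finf x)
    (x : ℝ) (hx : x ∈ I)
    (hfx : f 0 x ∈ {y ∈ Ω | ∀ k : ℕ, g^[k] y ∈ Ω}) :
    ∀ n : ℕ, f n x ∈ {y ∈ Ω | ∀ k : ℕ, g^[k] y ∈ Ω} ∧ f n x = g^[n] (f 0 x) := by
  -- f n agrees with finf on Ω
  have hfn : ∀ n : ℕ, ∀ y ∈ Ω, f n y = finf y := by
    intro n
    induction n with
    | zero => exact h0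
    | succ n ih =>
      intro y hy
      rw [hrec, ih y hy, ih (finf y) (hmap y hy), hidem y hy]
      ring
  -- Ω(g) is forward invariant under g
  have hginv : ∀ y, y ∈ {y ∈ Ω | ∀ k : ℕ, g^[k] y ∈ Ω} →
      g y ∈ {y ∈ Ω | ∀ k : ℕ, g^[k] y ∈ Ω} := by
    intro y hy
    refine ⟨hy.2 1, fun k => ?_⟩
    rw [← Function.iterate_succ_apply]
    exact hy.2 (k + 1)
  intro n
  induction n with
  | zero => exact ⟨hfx, rfl⟩
  | succ n ih =>
    obtain ⟨hmem, heq⟩ := ih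
    have hstep : f (n + 1) x = g (f n x) := by
      rw [hrec, hfn n (f n x) hmem.1, hg]
    constructor
    · rw [hstep]; exact hginv _ hmem
    · rw [hstep, heq]; exact (Function.iterate_succ_apply' g n _).symm
end

section
/- Let ε ∈ (0,1), E = ε/(2-ε), a > 0, b = a(1-ε)/(1+ε). Consider the function dynamics f_{n+1} = (1-ε)f_n + ε(f_n∘f_n) with the piecewise constant initial function f₀ of Example 3.6 (values -(a+b), -(a-b), a-b, a+b on the four Ω-pieces; -a+Eb on Ψ₀ = (0, a-b); a+Eb on Ψ₁ = (-(a-b), 0]; and constants -E(a+Eb), E(a-Eb) on X₀, X₁). Then f₂ = f₀, i.e., the function sequence is periodic with period 2. -/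
set_option maxHeartbeats 800000 in
/-- Example 3.6 (meta-map): with the piecewise constant initial function f₀,
    the function dynamics is periodic of period 2: f₂ = f₀ on all pieces. -/
theorem meta_map_period_two (ε a b E : ℝ) (hε : 0 < ε) (hε1 : ε < 1)
    (ha : 0 < a) (hb : b = a * (1 - ε) / (1 + ε)) (hE : E = ε / (2 - ε))
    (X₀ X₁ : Set ℝ)
    (f : ℕ → ℝ → ℝ)
    (hrec : ∀ n x, f (n + 1) x = (1 - ε) * f n x + ε * f n (f n x))
    (h1 : ∀ x ∈ ({-(a + b)} ∪ Set.Ioo (-a) (-(a - b)) : Set ℝ), f 0 x = -(a + b))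
    (h2 : ∀ x ∈ ({-(a - b)} ∪ Set.Ioc (-(a + b)) (-a) : Set ℝ), f 0 x = -(a - b))
    (h3 : ∀ x ∈ ({a - b} ∪ Set.Ioo a (a + b) : Set ℝ), f 0 x = a - b)
    (h4 : ∀ x ∈ ({a + b} ∪ Set.Ioc (a - b) a : Set ℝ), f 0 x = a + b)
    (hΨ0 : ∀ x ∈ Set.Ioo (0 : ℝ) (a - b), f 0 x = -a + E * b)
    (hΨ1 : ∀ x ∈ Set.Ioc (-(a - b)) (0 : ℝ), f 0 x = a + E * b)
    (hX0 : ∀ x ∈ X₀, f 0 x = -E * (a + E * b))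
    (hX1 : ∀ x ∈ X₁, f 0 x = E * (a - E * b)) :
    ∀ x ∈ (({-(a + b)} ∪ Set.Ioo (-a) (-(a - b))) ∪
        ({-(a - b)} ∪ Set.Ioc (-(a + b)) (-a)) ∪
        ({a - b} ∪ Set.Ioo a (a + b)) ∪
        ({a + b} ∪ Set.Ioc (a - b) a) ∪
        Set.Ioo (0 : ℝ) (a - b) ∪ Set.Ioc (-(a - b)) (0 : ℝ) ∪ X₀ ∪ X₁ : Set ℝ),
      f 2 x = f 0 x := by
  have h1e : (0:ℝ) < 1 - ε := by linarith
  have h2e : (0:ℝ) < 2 - ε := by linarith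
  have h1e' : (0:ℝ) < 1 + ε := by linarith
  have hb' : b * (1 + ε) = a * (1 - ε) := by
    rw [hb]; field_simp
  have hE' : E * (2 - ε) = ε := by
    rw [hE]; field_simp
  have hb0 : 0 < b := by
    rw [hb]; exact div_pos (mul_pos ha h1e) h1e'
  have hba : b < a := by nlinarith [mul_pos ha hε]
  have hE0 : 0 < E := by rw [hE]; exact div_pos hε h2e
  have hE1 : E < 1 := by nlinarith
  have hEb0 : 0 < E * b := mul_pos hE0 hb0
  have hEb : E * b < b := by nlinarith
  -- key size estimate : E*(a + E*b) < a - b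
  have heq : (a - b - E * (a + E * b)) * ((1 + ε) * (2 - ε) ^ 2)
      = 2 * a * ε * (1 - ε) * (3 - 2 * ε) := by
    linear_combination (-(2 - ε) ^ 2 - ε ^ 2) * hb'
      + (-(a * (1 + ε) * (2 - ε)) - b * (1 + ε) * (E * (2 - ε) + ε)) * hE'
  have hpos : (0:ℝ) < (1 + ε) * (2 - ε) ^ 2 := by positivity
  have hRHS : (0:ℝ) < 2 * a * ε * (1 - ε) * (3 - 2 * ε) := by
    have : (0:ℝ) < 3 - 2 * ε := by linarith
    positivity
  have hM5 : E * (a + E * b) < a - b := by nlinarith [heq, hpos, hRHS]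
  have hM5' : E * (a - E * b) < a - b := by nlinarith
  have hM5'0 : 0 < E * (a - E * b) := by
    apply mul_pos hE0; linarith
  have hM50 : 0 < E * (a + E * b) := by
    apply mul_pos hE0; linarith
  -- f₀ at the four corner values
  have hf01 : f 0 (-(a + b)) = -(a + b) := h1 _ (Or.inl rfl)
  have hf02 : f 0 (-(a - b)) = -(a - b) := h2 _ (Or.inl rfl)
  have hf03 : f 0 (a - b) = a - b := h3 _ (Or.inl rfl)
  have hf04 : f 0 (a + b) = a + b := h4 _ (Or.inl rfl)
  -- f₁ at the four corner values
  have hf11 : f 1 (-(a + b)) = -(a + b) := by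
    rw [hrec, hf01, hf01]; ring
  have hf12 : f 1 (-(a - b)) = -(a - b) := by
    rw [hrec, hf02, hf02]; ring
  have hf13 : f 1 (a - b) = a - b := by
    rw [hrec, hf03, hf03]; ring
  have hf14 : f 1 (a + b) = a + b := by
    rw [hrec, hf04, hf04]; ring
  -- f₀ at intermediate points
  have hf0A : f 0 (-a + E * b) = -(a + b) :=
    h1 _ (Or.inr ⟨by linarith, by linarith⟩)
  have hf0B : f 0 (-a - E * b) = -(a - b) :=
    h2 _ (Or.inr ⟨by linarith, by linarith⟩)
  have hf0C : f 0 (a + E * b) = a - b :=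
    h3 _ (Or.inr ⟨by linarith, by linarith⟩)
  have hf0D : f 0 (a - E * b) = a + b :=
    h4 _ (Or.inr ⟨by linarith, by linarith⟩)
  -- f₁ at intermediate points
  have hf1B : f 1 (-a - E * b) = -(a - b) := by
    rw [hrec, hf0B, hf02]; ring
  have hf1D : f 1 (a - E * b) = a + b := by
    rw [hrec, hf0D, hf04]; ring
  -- f₁ on Ψ₀ and Ψ₁
  have hf1Ψ0 : ∀ x ∈ Set.Ioo (0 : ℝ) (a - b), f 1 x = -a - E * b := by
    intro x hx
    rw [hrec, hΨ0 x hx, hf0A]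
    linear_combination b * hE'
  have hf1Ψ1 : ∀ x ∈ Set.Ioc (-(a - b)) (0 : ℝ), f 1 x = a - E * b := by
    intro x hx
    rw [hrec, hΨ1 x hx, hf0C]
    linear_combination b * hE'
  -- f₁ at the X-values
  have hf1X0v : f 1 (E * (a + E * b)) = -a - E * b :=
    hf1Ψ0 _ ⟨hM50, hM5⟩
  have hf1X1v : f 1 (-(E * (a - E * b))) = a - E * b :=
    hf1Ψ1 _ ⟨by linarith, by linarith⟩
  intro x hx
  rcases hx with ((((((hx | hx) | hx) | hx) | hx) | hx) | hx) | hx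
  · -- piece 1
    have h0 : f 0 x = -(a + b) := h1 x hx
    have hfx1 : f 1 x = -(a + b) := by rw [hrec, h0, hf01]; ring
    rw [hrec, hfx1, hf11, h0]; ring
  · -- piece 2
    have h0 : f 0 x = -(a - b) := h2 x hx
    have hfx1 : f 1 x = -(a - b) := by rw [hrec, h0, hf02]; ring
    rw [hrec, hfx1, hf12, h0]; ring
  · -- piece 3
    have h0 : f 0 x = a - b := h3 x hx
    have hfx1 : f 1 x = a - b := by rw [hrec, h0, hf03]; ring
    rw [hrec, hfx1, hf13, h0]; ring
  · -- piece 4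
    have h0 : f 0 x = a + b := h4 x hx
    have hfx1 : f 1 x = a + b := by rw [hrec, h0, hf04]; ring
    rw [hrec, hfx1, hf14, h0]; ring
  · -- Ψ₀
    have h0 : f 0 x = -a + E * b := hΨ0 x hx
    have hfx1 : f 1 x = -a - E * b := hf1Ψ0 x hx
    rw [hrec, hfx1, hf1B, h0]
    linear_combination (-b) * hE'
  · -- Ψ₁
    have h0 : f 0 x = a + E * b := hΨ1 x hx
    have hfx1 : f 1 x = a - E * b := hf1Ψ1 x hx
    rw [hrec, hfx1, hf1D, h0]
    linear_combination (-b) * hE'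
  · -- X₀
    have h0 : f 0 x = -E * (a + E * b) := hX0 x hx
    have hfx1 : f 1 x = E * (a + E * b) := by
      rw [hrec, h0]
      have hmem : -E * (a + E * b) ∈ Set.Ioc (-(a - b)) (0 : ℝ) :=
        ⟨by rw [neg_mul]; linarith, by rw [neg_mul]; linarith⟩
      rw [hΨ1 _ hmem]
      linear_combination (-(a + E * b)) * hE'
    rw [hrec, hfx1, hf1X0v, h0]
    linear_combination (a + E * b) * hE'
  · -- X₁
    have h0 : f 0 x = E * (a - E * b) := hX1 x hx
    have hfx1 : f 1 x = -(E * (a - E * b)) := by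
      rw [hrec, h0]
      have hmem : E * (a - E * b) ∈ Set.Ioo (0 : ℝ) (a - b) := ⟨hM5'0, hM5'⟩
      rw [hΨ0 _ hmem]
      linear_combination (a - E * b) * hE'
    rw [hrec, hfx1, hf1X1v, h0]
    linear_combination (-(a - E * b)) * hE'
end

section
/- Let ε ∈ (0,1) and define f₀ on Ω ∪ Ψ₀ ∪ Ψ₁ where Ω_{ε-3} = [ε-3,-2] ∪ (-1,0], Ω_{3-ε} = (0,1] ∪ (2, 3-ε], Ψ₀ = (-2,-1], Ψ₁ = (1,2], by f₀ = ε-3 on Ω_{ε-3}, f₀ = 3-ε on Ω_{3-ε}, f₀ = 1+ε on Ψ₀, f₀ = -(1-ε) on Ψ₁. Then under f_{n+1} = (1-ε)f_n + ε(f_n∘f_n): f₁ = 1-ε on Ψ₀ and f₁ = -(1+ε) on Ψ₁ (with f₁ = f₀ on Ω_{ε-3} ∪ Ω_{3-ε}), and f₂ = f₀, so the dynamics is periodic of period 2. -/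
/-- Example 4.1 (entangled hierarchy): with the piecewise constant initial
    function f₀, one has f₁ = 1-ε on Ψ₀, f₁ = -(1+ε) on Ψ₁, f₁ = f₀ on the
    Ω-pieces, and f₂ = f₀, so the dynamics is periodic of period 2. -/
theorem entangled_hierarchy_period_two (ε : ℝ) (hε : 0 < ε) (hε1 : ε < 1)
    (f : ℕ → ℝ → ℝ)
    (hrec : ∀ n x, f (n + 1) x = (1 - ε) * f n x + ε * f n (f n x))
    (hΩm : ∀ x ∈ (Set.Icc (ε - 3) (-2) ∪ Set.Ioc (-1) 0 : Set ℝ), f 0 x = ε - 3)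
    (hΩp : ∀ x ∈ (Set.Ioc (0 : ℝ) 1 ∪ Set.Ioc 2 (3 - ε) : Set ℝ), f 0 x = 3 - ε)
    (hΨ0 : ∀ x ∈ Set.Ioc (-2 : ℝ) (-1), f 0 x = 1 + ε)
    (hΨ1 : ∀ x ∈ Set.Ioc (1 : ℝ) 2, f 0 x = -(1 - ε)) :
    (∀ x ∈ Set.Ioc (-2 : ℝ) (-1), f 1 x = 1 - ε) ∧
      (∀ x ∈ Set.Ioc (1 : ℝ) 2, f 1 x = -(1 + ε)) ∧
      (∀ x ∈ (Set.Icc (ε - 3) (-2) ∪ Set.Ioc (-1) 0 ∪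
          Set.Ioc (0 : ℝ) 1 ∪ Set.Ioc 2 (3 - ε) : Set ℝ), f 1 x = f 0 x) ∧
      (∀ x ∈ Set.Icc (ε - 3) (3 - ε), f 2 x = f 0 x) := by
  have hf0a : f 0 (ε - 3) = ε - 3 := hΩm _ (Or.inl ⟨le_refl _, by linarith⟩)
  have hf0b : f 0 (3 - ε) = 3 - ε := hΩp _ (Or.inr ⟨by linarith, le_refl _⟩)
  have hf0c : f 0 (1 + ε) = -(1 - ε) := hΨ1 _ ⟨by linarith, by linarith⟩
  have hf0d : f 0 (-(1 - ε)) = ε - 3 := hΩm _ (Or.inr ⟨by linarith, by linarith⟩)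
  have h1Ψ0 : ∀ x ∈ Set.Ioc (-2:ℝ) (-1), f 1 x = 1 - ε := by
    intro x hx
    have h := hrec 0 x; rw [zero_add] at h; rw [h, hΨ0 x hx, hf0c]; ring
  have h1Ψ1 : ∀ x ∈ Set.Ioc (1:ℝ) 2, f 1 x = -(1 + ε) := by
    intro x hx
    have h := hrec 0 x; rw [zero_add] at h; rw [h, hΨ1 x hx, hf0d]; ring
  have h1Ωm : ∀ x ∈ (Set.Icc (ε-3) (-2) ∪ Set.Ioc (-1) 0 : Set ℝ), f 1 x = ε - 3 := by
    intro x hx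
    have h := hrec 0 x; rw [zero_add] at h; rw [h, hΩm x hx, hf0a]; ring
  have h1Ωp : ∀ x ∈ (Set.Ioc (0:ℝ) 1 ∪ Set.Ioc 2 (3-ε) : Set ℝ), f 1 x = 3 - ε := by
    intro x hx
    have h := hrec 0 x; rw [zero_add] at h; rw [h, hΩp x hx, hf0b]; ring
  refine ⟨h1Ψ0, h1Ψ1, ?_, ?_⟩
  · intro x hx
    rcases hx with ((h|h)|h)|h
    · rw [h1Ωm x (Or.inl h), hΩm x (Or.inl h)]
    · rw [h1Ωm x (Or.inr h), hΩm x (Or.inr h)]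
    · rw [h1Ωp x (Or.inl h), hΩp x (Or.inl h)]
    · rw [h1Ωp x (Or.inr h), hΩp x (Or.inr h)]
  · intro x hx
    obtain ⟨hx1, hx2⟩ := hx
    rcases le_or_gt x (-2) with h2 | h2
    · have h := hrec 1 x; norm_num at h; rw [h, h1Ωm x (Or.inl ⟨hx1, h2⟩),
        h1Ωm (ε-3) (Or.inl ⟨le_refl _, by linarith⟩), hΩm x (Or.inl ⟨hx1, h2⟩)]; ring
    rcases le_or_gt x (-1) with h3 | h3
    · have h := hrec 1 x; norm_num at h; rw [h, h1Ψ0 x ⟨h2, h3⟩,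
        h1Ωp (1-ε) (Or.inl ⟨by linarith, by linarith⟩), hΨ0 x ⟨h2, h3⟩]; ring
    rcases le_or_gt x 0 with h4 | h4
    · have h := hrec 1 x; norm_num at h; rw [h, h1Ωm x (Or.inr ⟨h3, h4⟩),
        h1Ωm (ε-3) (Or.inl ⟨le_refl _, by linarith⟩), hΩm x (Or.inr ⟨h3, h4⟩)]; ring
    rcases le_or_gt x 1 with h5 | h5
    · have h := hrec 1 x; norm_num at h; rw [h, h1Ωp x (Or.inl ⟨h4, h5⟩),
        h1Ωp (3-ε) (Or.inr ⟨by linarith, le_refl _⟩), hΩp x (Or.inl ⟨h4, h5⟩)]; ring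
    rcases le_or_gt x 2 with h6 | h6
    · have h := hrec 1 x; norm_num at h; rw [h, h1Ψ1 x ⟨h5, h6⟩,
        h1Ψ0 (-(1+ε)) ⟨by linarith, by linarith⟩, hΨ1 x ⟨h5, h6⟩]; ring
    · have h := hrec 1 x; norm_num at h; rw [h, h1Ωp x (Or.inr ⟨h6, hx2⟩),
        h1Ωp (3-ε) (Or.inr ⟨by linarith, le_refl _⟩), hΩp x (Or.inr ⟨h6, hx2⟩)]; ring
end
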